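/- arXiv:2309.07785 — 3 statements merged into one kernel-verified Lean document; each statement's English description precedes it below -/
import Mathlib

section
/- For any nonnegative integer N and ν ∈ {0,1}, Σ_{k=−N}^{N+ν} q^{2k²−k} [2N+ν choose N+k]_{q²} = (−q; q)_{2N+ν}, where (−q;q)_M = Π_{j=1}^{M} (1 + q^j). -/
open Finset PowerSeries

/-- A partition represented as a non-increasing list of positive integers. -/
def IsPartitionList (L : List ℕ) : Prop :=
  L.Pairwise (· ≥ ·) ∧ ∀ x ∈ L, 0 < x

/-- A partition into distinct parts (strict partition). -/
def IsStrictPartitionList (L : List ℕ) : Prop :=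
  L.Pairwise (· > ·) ∧ ∀ x ∈ L, 0 < x

/-- BG-rank: (# odd parts in odd (1-based) positions) − (# odd parts in even positions). -/
def bgRank (L : List ℕ) : ℤ :=
  (((L.zipIdx.map Prod.swap).filter (fun p => p.2 % 2 == 1 && p.1 % 2 == 0)).length : ℤ) -
  (((L.zipIdx.map Prod.swap).filter (fun p => p.2 % 2 == 1 && p.1 % 2 == 1)).length : ℤ)

/-- Length of the `j`-th (1-based) column of the shifted Young diagram of `L`:
row `i` (1-based) occupies columns `i, …, i + λ_i - 1`. -/
def shiftedCol (L : List ℕ) (j : ℕ) : ℕ :=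
  ((Finset.range L.length).filter (fun i => i + 1 ≤ j ∧ j ≤ i + L.getD i 0)).card

/-- Alternating sum `∑_{i=1}^{m} (-1)^i c_i` of shifted column lengths. -/
def altColSum (L : List ℕ) (m : ℕ) : ℤ :=
  ∑ i ∈ Finset.range m, (-1 : ℤ) ^ (i + 1) * (shiftedCol L (i + 1) : ℤ)

/-- An (a,b)-sequence: `d_i = a + i` for `1 ≤ i ≤ b`, non-increasing from index `b`,
positive entries, and alternating sum zero. (0-based indexing via `getD`.) -/
def IsABSeq (a b : ℕ) (d : List ℕ) : Prop :=
  1 ≤ b ∧ b ≤ d.length ∧ (∀ x ∈ d, 0 < x) ∧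
  (∀ i < b, d.getD i 0 = a + i + 1) ∧
  (∀ i j, b - 1 ≤ i → i ≤ j → j < d.length → d.getD j 0 ≤ d.getD i 0) ∧
  (∑ i ∈ Finset.range d.length, (-1 : ℤ) ^ (i + 1) * (d.getD i 0 : ℤ)) = 0

/-- The quantities `b_i`: `b_1 = d_1`, `b_i = d_i - b_{i-1}` (0-based: `bAux d (i-1) = b_i`). -/
def bAux (d : List ℕ) : ℕ → ℤ
  | 0 => (d.getD 0 0 : ℤ)
  | n + 1 => (d.getD (n + 1) 0 : ℤ) - bAux d n

/-- The q-Pochhammer symbol `(q²; q²)_n` as a power series in `q`. -/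
noncomputable def qq2Poch (n : ℕ) : PowerSeries ℚ :=
  ∏ i ∈ Finset.range n, (1 - (PowerSeries.X : PowerSeries ℚ) ^ (2 * (i + 1)))

/-- The Gaussian binomial coefficient `[m choose n]_{q²}` as a power series in `q`,
zero unless `0 ≤ n ≤ m`. -/
noncomputable def gaussBinom2 (m : ℕ) (n : ℤ) : PowerSeries ℚ :=
  if 0 ≤ n ∧ n ≤ (m : ℤ) then
    qq2Poch m * (qq2Poch n.toNat * qq2Poch (m - n.toNat))⁻¹
  else 0

/-! Write `S_M = ∑_k q^{2k²-k} [M choose ⌊M/2⌋ + k]_{q²}`, summed over all integers `k`.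
Splitting every Gaussian binomial of `S_{M+1}` by a `q²`-Pascal recurrence gives two sums:
one is `S_M`, and the other, after the reflection `k ↦ 1 - k` (`M` even) or `k ↦ -k` (`M` odd)
and the symmetry `[m choose n] = [m choose m - n]`, is `q^{M+1} S_M`.
Hence `S_{M+1} = (1 + q^{M+1}) S_M`, and `S_0 = 1`. -/

lemma constantCoeff_qq2Poch (n : ℕ) : constantCoeff (qq2Poch n) = 1 := by
  simp [qq2Poch, map_prod]

lemma qq2Poch_ne_zero (n : ℕ) : qq2Poch n ≠ 0 := fun h => by
  simpa [h] using constantCoeff_qq2Poch n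

lemma qq2Poch_succ (n : ℕ) : qq2Poch (n + 1) = qq2Poch n * (1 - X ^ (2 * (n + 1))) :=
  prod_range_succ _ _

lemma qq2Poch_zero : qq2Poch 0 = 1 := prod_range_zero _

lemma gaussBinom2_eq_zero {m : ℕ} {n : ℤ} (h : n < 0 ∨ (m : ℤ) < n) :
    gaussBinom2 m n = 0 := by
  rw [gaussBinom2, if_neg]; omega

lemma nonneg_and_le_of_gaussBinom2_ne_zero {m : ℕ} {n : ℤ} (h : gaussBinom2 m n ≠ 0) :
    0 ≤ n ∧ n ≤ m := by
  by_contra h'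
  exact h (gaussBinom2_eq_zero (by omega))

lemma gaussBinom2_mul_qq2Poch (a b : ℕ) :
    gaussBinom2 (a + b) a * (qq2Poch a * qq2Poch b) = qq2Poch (a + b) := by
  rw [gaussBinom2, if_pos (by omega), Int.toNat_natCast, Nat.add_sub_cancel_left, mul_assoc,
    PowerSeries.inv_mul_cancel _ (by simp [constantCoeff_qq2Poch]), mul_one]

lemma gaussBinom2_zero_right (m : ℕ) : gaussBinom2 m 0 = 1 := by
  have h := gaussBinom2_mul_qq2Poch 0 m
  rw [zero_add, Nat.cast_zero, qq2Poch_zero, one_mul] at h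
  exact (mul_eq_right₀ (qq2Poch_ne_zero m)).mp h

lemma gaussBinom2_self (m : ℕ) : gaussBinom2 m m = 1 := by
  have h := gaussBinom2_mul_qq2Poch m 0
  rw [add_zero, qq2Poch_zero, mul_one] at h
  exact (mul_eq_right₀ (qq2Poch_ne_zero m)).mp h

lemma gaussBinom2_symm (m : ℕ) (n : ℤ) : gaussBinom2 m (m - n) = gaussBinom2 m n := by
  unfold gaussBinom2
  by_cases h : 0 ≤ n ∧ n ≤ (m : ℤ)
  · rw [if_pos (by omega), if_pos h, show ((m : ℤ) - n).toNat = m - n.toNat by omega,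
      show m - (m - n.toNat) = n.toNat by omega, mul_comm (qq2Poch (m - n.toNat))]
  · rw [if_neg (by omega), if_neg h]

lemma gaussBinom2_pascal_of_pos (a b : ℕ) :
    gaussBinom2 (a + b + 2) (a + 1 : ℕ) =
      gaussBinom2 (a + b + 1) (a + 1 : ℕ) + X ^ (2 * (b + 1)) * gaussBinom2 (a + b + 1) a := by
  -- After clearing denominators this is `1 - y^(a+b+2) = (1 - y^(b+1)) + y^(b+1) (1 - y^(a+1))`
  -- with `y = q²`.
  refine mul_right_cancel₀ (mul_ne_zero (qq2Poch_ne_zero (a + 1)) (qq2Poch_ne_zero (b + 1))) ?_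
  have lhs := gaussBinom2_mul_qq2Poch (a + 1) (b + 1)
  have first := gaussBinom2_mul_qq2Poch (a + 1) b
  have second := gaussBinom2_mul_qq2Poch a (b + 1)
  rw [show a + 1 + (b + 1) = a + b + 2 by ring] at lhs
  rw [show a + 1 + b = a + b + 1 by ring] at first
  rw [show a + (b + 1) = a + b + 1 by ring] at second
  have ha := qq2Poch_succ a
  have hb := qq2Poch_succ b
  rw [lhs, show a + b + 2 = a + b + 1 + 1 by ring, qq2Poch_succ]
  linear_combination (-gaussBinom2 (a + b + 1) (a + 1 : ℕ) * qq2Poch (a + 1)) * hb -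
    (1 - X ^ (2 * (b + 1))) * first -
    X ^ (2 * (b + 1)) * gaussBinom2 (a + b + 1) a * qq2Poch (b + 1) * ha -
    X ^ (2 * (b + 1)) * (1 - X ^ (2 * (a + 1))) * second

lemma gaussBinom2_succ (m : ℕ) (n : ℤ) :
    gaussBinom2 (m + 1) n =
      gaussBinom2 m n + X ^ (2 * ((m : ℤ) + 1 - n).toNat) * gaussBinom2 m (n - 1) := by
  by_cases hn : 0 < n ∧ n ≤ m
  · obtain ⟨a, rfl⟩ : ∃ a : ℕ, n = (a + 1 : ℕ) := ⟨n.toNat - 1, by omega⟩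
    obtain ⟨b, rfl⟩ : ∃ b : ℕ, m = a + b + 1 := ⟨m - a - 1, by omega⟩
    rw [gaussBinom2_pascal_of_pos,
      show ((a + b + 1 : ℕ) : ℤ) + 1 - (a + 1 : ℕ) = (b + 1 : ℕ) by push_cast; ring,
      Int.toNat_natCast, show ((a + 1 : ℕ) : ℤ) - 1 = a by push_cast; ring]
  rcases (by omega : n < 0 ∨ n = 0 ∨ n = m + 1 ∨ (m : ℤ) + 1 < n) with hn | rfl | rfl | hn
  · simp [gaussBinom2_eq_zero (m := m) (n := n) (by omega),
      gaussBinom2_eq_zero (m := m + 1) (n := n) (by omega),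
      gaussBinom2_eq_zero (m := m) (n := n - 1) (by omega)]
  · simp [gaussBinom2_zero_right, gaussBinom2_eq_zero (m := m) (n := -1) (by omega)]
  · have top := gaussBinom2_self (m + 1)
    push_cast at top
    simp [top, gaussBinom2_self, gaussBinom2_eq_zero (m := m) (n := m + 1) (by omega)]
  · simp [gaussBinom2_eq_zero (m := m) (n := n) (by omega),
      gaussBinom2_eq_zero (m := m + 1) (n := n) (by push_cast; omega),
      gaussBinom2_eq_zero (m := m) (n := n - 1) (by omega)]

lemma gaussBinom2_succ' (m : ℕ) (n : ℤ) :
    gaussBinom2 (m + 1) n = gaussBinom2 m (n - 1) + X ^ (2 * n.toNat) * gaussBinom2 m n := by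
  rw [← gaussBinom2_symm, gaussBinom2_succ, ← gaussBinom2_symm m (n - 1),
    ← gaussBinom2_symm m n]
  push_cast
  ring_nf

lemma hasFiniteSupport_mul_gaussBinom2 (g : ℤ → PowerSeries ℚ) (m : ℕ) {f : ℤ → ℤ}
    (hf : f.Injective) : Function.HasFiniteSupport fun k => g k * gaussBinom2 m (f k) :=
  ((Set.finite_Icc 0 (m : ℤ)).preimage hf.injOn).subset fun _ hk =>
    nonneg_and_le_of_gaussBinom2_ne_zero (right_ne_zero_of_mul hk)

noncomputable def bgRankSum (m : ℕ) (c : ℤ) : PowerSeries ℚ :=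
  ∑ᶠ k : ℤ, X ^ (2 * k ^ 2 - k).toNat * gaussBinom2 m (c + k)

lemma two_mul_sq_sub_nonneg (k : ℤ) : 0 ≤ 2 * k ^ 2 - k := by nlinarith

lemma bgRankSum_two_mul_add_one (N : ℕ) :
    bgRankSum (2 * N + 1) N = (1 + X ^ (2 * N + 1)) * bgRankSum (2 * N) N := by
  have reflect : ∑ᶠ k : ℤ, X ^ (2 * k ^ 2 - k).toNat *
      X ^ (2 * (((2 * N : ℕ) : ℤ) + 1 - (N + k)).toNat) * gaussBinom2 (2 * N) (N + k - 1) =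
      X ^ (2 * N + 1) * bgRankSum (2 * N) N := by
    rw [bgRankSum, mul_finsum, ← finsum_comp_equiv (Equiv.subLeft 1)]
    refine finsum_congr fun j => ?_
    rw [Equiv.subLeft_apply,
      show (N : ℤ) + (1 - j) - 1 = ((2 * N : ℕ) : ℤ) - (N + j) by push_cast; ring,
      gaussBinom2_symm]
    -- With `e(k) = 2k² - k`: `e(1 - j) + 2 (N + j) = e(j) + 2N + 1`, but the `toNat` exponents
    -- only agree where `N + j ≥ 0`.
    by_cases h : gaussBinom2 (2 * N) (N + j) = 0
    · simp [h]
    have hj := (nonneg_and_le_of_gaussBinom2_ne_zero h).1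
    have e1 := two_mul_sq_sub_nonneg j
    have e2 := two_mul_sq_sub_nonneg (1 - j)
    rw [← mul_assoc, ← pow_add, ← pow_add]
    congr 2
    rw [show (1 - j) ^ 2 = j ^ 2 - 2 * j + 1 by ring] at e2 ⊢
    omega
  rw [bgRankSum, finsum_congr fun k => by rw [gaussBinom2_succ, mul_add, ← mul_assoc],
    finsum_add_distrib (hasFiniteSupport_mul_gaussBinom2 _ _ (add_right_injective _))
      (hasFiniteSupport_mul_gaussBinom2 _ _ (f := fun k => N + k - 1)
        fun _ _ h => by simpa using h),
    reflect, ← bgRankSum]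
  ring

lemma bgRankSum_two_mul_add_two (N : ℕ) :
    bgRankSum (2 * N + 2) (N + 1) = (1 + X ^ (2 * N + 2)) * bgRankSum (2 * N + 1) N := by
  have reflect : ∑ᶠ k : ℤ, X ^ (2 * k ^ 2 - k).toNat * X ^ (2 * ((N : ℤ) + 1 + k).toNat) *
      gaussBinom2 (2 * N + 1) (N + 1 + k) = X ^ (2 * N + 2) * bgRankSum (2 * N + 1) N := by
    rw [bgRankSum, mul_finsum, ← finsum_comp_equiv (Equiv.neg ℤ)]
    refine finsum_congr fun j => ?_
    rw [Equiv.neg_apply,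
      show (N : ℤ) + 1 + -j = ((2 * N + 1 : ℕ) : ℤ) - (N + j) by push_cast; ring,
      gaussBinom2_symm]
    by_cases h : gaussBinom2 (2 * N + 1) (N + j) = 0
    · simp [h]
    have hj := (nonneg_and_le_of_gaussBinom2_ne_zero h).2
    have e1 := two_mul_sq_sub_nonneg j
    have e2 := two_mul_sq_sub_nonneg (-j)
    rw [← mul_assoc, ← pow_add, ← pow_add]
    congr 2
    rw [neg_sq] at e2 ⊢
    push_cast at hj ⊢
    omega
  rw [bgRankSum, finsum_congr fun k => by
      rw [gaussBinom2_succ', mul_add, ← mul_assoc, show (N : ℤ) + 1 + k - 1 = N + k by ring],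
    finsum_add_distrib (hasFiniteSupport_mul_gaussBinom2 _ _ (add_right_injective _))
      (hasFiniteSupport_mul_gaussBinom2 _ _ (add_right_injective _)),
    reflect, ← bgRankSum]
  ring

lemma bgRankSum_zero : bgRankSum 0 0 = 1 := by
  rw [bgRankSum, finsum_eq_single _ 0 fun k hk => by rw [gaussBinom2_eq_zero (by omega), mul_zero]]
  simp [gaussBinom2_zero_right]

lemma bgRankSum_half (M : ℕ) :
    bgRankSum M (M / 2 : ℕ) = ∏ j ∈ range M, (1 + X ^ (j + 1)) := by
  induction M with
  | zero => simpa using bgRankSum_zero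
  | succ M ih =>
    rw [prod_range_succ, ← ih]
    obtain ⟨N, rfl | rfl⟩ := Nat.even_or_odd' M
    · rw [show (2 * N + 1) / 2 = N by omega, show 2 * N / 2 = N by omega,
        bgRankSum_two_mul_add_one]
      ring
    · rw [show (2 * N + 1 + 1) / 2 = N + 1 by omega, show (2 * N + 1) / 2 = N by omega,
        Nat.cast_add_one, bgRankSum_two_mul_add_two]
      ring

/-- `∑_{k=−N}^{N+ν} q^{2k²−k} [2N+ν choose N+k]_{q²} = (−q;q)_{2N+ν}`. -/
theorem sum_over_bgRank (N : ℕ) (ν : ℕ) (hν : ν = 0 ∨ ν = 1) :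
    ∑ k ∈ Finset.Icc (-(N : ℤ)) ((N : ℤ) + ν),
        (PowerSeries.X : PowerSeries ℚ) ^ (2 * k ^ 2 - k).toNat *
          gaussBinom2 (2 * N + ν) ((N : ℤ) + k) =
      ∏ j ∈ Finset.range (2 * N + ν), (1 + (PowerSeries.X : PowerSeries ℚ) ^ (j + 1)) := by
  have support_subset : Function.support (fun k : ℤ =>
      (X : PowerSeries ℚ) ^ (2 * k ^ 2 - k).toNat * gaussBinom2 (2 * N + ν) (N + k)) ⊆
      Finset.Icc (-(N : ℤ)) (N + ν) := fun k hk => by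
    have := nonneg_and_le_of_gaussBinom2_ne_zero (right_ne_zero_of_mul hk)
    push_cast at this ⊢
    simp only [Set.mem_Icc]
    omega
  rw [← finsum_eq_sum_of_support_subset _ support_subset, ← bgRankSum, ← bgRankSum_half,
    show (2 * N + ν) / 2 = N by omega]
end

section
/- Every partition π_d of n into distinct parts with BG-rank k satisfies n ≥ 2k² − k, and n ≡ 2k² − k (mod 2); moreover for each integer k and each n ≡ 2k²−k (mod 2) with n ≥ 2k²−k, there exists at least one such partition. -/
/-! Deleting the first part shifts every position by one, so
`bgRank (a :: l) = [a odd] - bgRank l`. By induction, a partition with `ℓ` parts and BG-rank `k`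
has `-ℓ ≤ 2k ≤ ℓ + 1`, and `k` has the parity of the number of odd parts, i.e. of the size `n`.
A strict partition with `ℓ` parts has `2n ≥ ℓ(ℓ + 1)`, which under these bounds is at least
`2(2k² - k)`. Conversely, the staircase `(m, m - 1, …, 1)` with `m = 2k - 1` (for `k > 0`) or
`m = -2k` (for `k ≤ 0`) has BG-rank `k` and size `2k² - k`; adding `2` to the largest part (or
passing from the empty partition to `(2)`) raises the size by `2` and keeps the BG-rank. -/

open Finset PowerSeries

theorem bgRank_cons (a : ℕ) (l : List ℕ) :
    bgRank (a :: l) = (if a % 2 = 1 then 1 else 0) - bgRank l := by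
  simp only [bgRank, ← List.countP_eq_length_filter, List.zipIdx_cons', List.map_cons,
    List.map_map, List.countP_cons, List.countP_map]
  have shift (r : ℕ) (hr : r < 2) :
      l.zipIdx.countP ((fun p => p.2 % 2 == 1 && p.1 % 2 == r) ∘ Prod.swap ∘ Prod.map id (· + 1))
        = l.zipIdx.countP ((fun p => p.2 % 2 == 1 && p.1 % 2 == 1 - r) ∘ Prod.swap) :=
    List.countP_congr fun p _ => by simp; omega
  rw [shift 0 (by norm_num), shift 1 (by norm_num)]
  split_ifs <;> simp_all; ring

theorem bgRank_bounds (L : List ℕ) :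
    -(L.length : ℤ) ≤ 2 * bgRank L ∧ 2 * bgRank L ≤ L.length + 1 := by
  induction L with
  | nil => simp [bgRank]
  | cons a l ih =>
    rw [bgRank_cons, List.length_cons]
    split_ifs <;> omega

theorem two_dvd_sum_sub_bgRank (L : List ℕ) : (2 : ℤ) ∣ L.sum - bgRank L := by
  induction L with
  | nil => simp [bgRank]
  | cons a l ih =>
    rw [bgRank_cons, List.sum_cons]
    split_ifs <;> omega

theorem IsStrictPartitionList.of_cons {a : ℕ} {l : List ℕ} (h : IsStrictPartitionList (a :: l)) :
    IsStrictPartitionList l :=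
  ⟨(List.pairwise_cons.mp h.1).2, fun x hx => h.2 x (List.mem_cons_of_mem a hx)⟩

theorem IsStrictPartitionList.length_lt_head {a : ℕ} {l : List ℕ}
    (h : IsStrictPartitionList (a :: l)) : l.length < a := by
  induction l generalizing a with
  | nil => exact h.2 a List.mem_cons_self
  | cons b l ih =>
    have hba : b < a := (List.pairwise_cons.mp h.1).1 b List.mem_cons_self
    have := ih h.of_cons
    simp only [List.length_cons]
    omega

theorem IsStrictPartitionList.length_mul_succ_le_two_mul_sum {L : List ℕ}
    (h : IsStrictPartitionList L) : L.length * (L.length + 1) ≤ 2 * L.sum := by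
  induction L with
  | nil => simp
  | cons a l ih =>
    have := h.length_lt_head
    have := ih h.of_cons
    simp only [List.length_cons, List.sum_cons]
    nlinarith

theorem two_mul_sq_sub_le_of_bounds {k ℓ : ℤ} (h₁ : -ℓ ≤ 2 * k) (h₂ : 2 * k ≤ ℓ + 1) :
    2 * (2 * k ^ 2 - k) ≤ ℓ * (ℓ + 1) := by
  rcases le_or_gt k 0 with hk | hk <;> nlinarith

theorem IsStrictPartitionList.two_mul_sq_sub_le_sum {L : List ℕ} (h : IsStrictPartitionList L) :
    2 * bgRank L ^ 2 - bgRank L ≤ L.sum := by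
  obtain ⟨h₁, h₂⟩ := bgRank_bounds L
  have := two_mul_sq_sub_le_of_bounds h₁ h₂
  have : (L.length : ℤ) * (L.length + 1) ≤ 2 * L.sum := by
    exact_mod_cast h.length_mul_succ_le_two_mul_sum
  linarith

def staircase : ℕ → List ℕ
  | 0 => []
  | m + 1 => (m + 1) :: staircase m

theorem mem_staircase {m x : ℕ} (hx : x ∈ staircase m) : 0 < x ∧ x ≤ m := by
  induction m with
  | zero => simp [staircase] at hx
  | succ m ih =>
    rcases List.mem_cons.mp hx with rfl | hx
    · omega
    · have := ih hx; omega

theorem isStrictPartitionList_staircase (m : ℕ) : IsStrictPartitionList (staircase m) := by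
  induction m with
  | zero => simp [staircase, IsStrictPartitionList]
  | succ m ih =>
    refine ⟨List.pairwise_cons.mpr ⟨fun x hx => ?_, ih.1⟩, fun x hx => ?_⟩
    · have := mem_staircase hx; omega
    · rcases List.mem_cons.mp hx with rfl | hx
      · omega
      · exact ih.2 x hx

theorem two_mul_sum_staircase (m : ℕ) : 2 * (staircase m).sum = m * (m + 1) := by
  induction m with
  | zero => rfl
  | succ m ih => rw [staircase, List.sum_cons]; nlinarith

theorem bgRank_staircase (j : ℕ) :
    bgRank (staircase (2 * j)) = -j ∧ bgRank (staircase (2 * j + 1)) = j + 1 := by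
  induction j with
  | zero => simp [staircase, bgRank]
  | succ j ih =>
    have heven : bgRank (staircase (2 * (j + 1))) = -(j + 1 : ℕ) := by
      rw [show 2 * (j + 1) = 2 * j + 1 + 1 by ring, staircase, bgRank_cons, ih.2]
      split_ifs <;> omega
    refine ⟨heven, ?_⟩
    rw [staircase, bgRank_cons, heven]
    split_ifs <;> omega

theorem exists_staircase_bgRank (k : ℤ) :
    ∃ m, bgRank (staircase m) = k ∧ ((staircase m).sum : ℤ) = 2 * k ^ 2 - k := by
  suffices ∃ m, bgRank (staircase m) = k ∧ (m : ℤ) * (m + 1) = 2 * (2 * k ^ 2 - k) by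
    obtain ⟨m, hrank, hm⟩ := this
    refine ⟨m, hrank, ?_⟩
    have : (2 * (staircase m).sum : ℤ) = m * (m + 1) := by exact_mod_cast two_mul_sum_staircase m
    linarith
  obtain ⟨j, rfl | rfl⟩ := Int.eq_nat_or_neg k
  · rcases j with _ | j
    · exact ⟨0, by simp [staircase, bgRank], by simp⟩
    · exact ⟨2 * j + 1, by simpa using (bgRank_staircase j).2, by push_cast; ring⟩
  · exact ⟨2 * j, (bgRank_staircase j).1, by push_cast; ring⟩

theorem IsStrictPartitionList.exists_sum_add_two {L : List ℕ} (h : IsStrictPartitionList L) :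
    ∃ L', IsStrictPartitionList L' ∧ L'.sum = L.sum + 2 ∧ bgRank L' = bgRank L := by
  rcases L with _ | ⟨a, l⟩
  · refine ⟨[2], ⟨by simp, by simp⟩, rfl, rfl⟩
  · refine ⟨(a + 2) :: l, ⟨?_, ?_⟩, ?_, ?_⟩
    · have hl := List.pairwise_cons.mp h.1
      exact List.pairwise_cons.mpr ⟨fun x hx => by have := hl.1 x hx; omega, hl.2⟩
    · intro x hx
      rcases List.mem_cons.mp hx with rfl | hx
      · omega
      · exact h.2 x (List.mem_cons_of_mem a hx)
    · simp only [List.sum_cons]; ring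
    · simp only [bgRank_cons, Nat.add_mod_right]

theorem IsStrictPartitionList.exists_sum_add_two_mul {L : List ℕ} (h : IsStrictPartitionList L)
    (t : ℕ) : ∃ L', IsStrictPartitionList L' ∧ L'.sum = L.sum + 2 * t ∧ bgRank L' = bgRank L := by
  induction t with
  | zero => exact ⟨L, h, rfl, rfl⟩
  | succ t ih =>
    obtain ⟨L₁, h₁, hsum₁, hrank₁⟩ := ih
    obtain ⟨L₂, h₂, hsum₂, hrank₂⟩ := h₁.exists_sum_add_two
    exact ⟨L₂, h₂, by omega, hrank₂.trans hrank₁⟩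

/-- every strict partition of `n` with BG-rank `k` satisfies `n ≥ 2k² − k` and
`n ≡ 2k² − k (mod 2)`; conversely any such `n` is realized. -/
theorem strictBG_size_constraints :
    (∀ (L : List ℕ) (k : ℤ), IsStrictPartitionList L → bgRank L = k →
      2 * k ^ 2 - k ≤ (L.sum : ℤ) ∧ (2 : ℤ) ∣ ((L.sum : ℤ) - (2 * k ^ 2 - k))) ∧
    (∀ (k : ℤ) (n : ℕ), 2 * k ^ 2 - k ≤ (n : ℤ) → (2 : ℤ) ∣ ((n : ℤ) - (2 * k ^ 2 - k)) →
      ∃ L : List ℕ, IsStrictPartitionList L ∧ L.sum = n ∧ bgRank L = k) := by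
  refine ⟨fun L k h hk => ?_, fun k n hle hdvd => ?_⟩
  · subst hk
    refine ⟨h.two_mul_sq_sub_le_sum, ?_⟩
    rw [show (L.sum : ℤ) - (2 * bgRank L ^ 2 - bgRank L)
        = L.sum - bgRank L - 2 * (bgRank L ^ 2 - bgRank L) by ring]
    exact dvd_sub (two_dvd_sum_sub_bgRank L) (dvd_mul_right 2 _)
  · obtain ⟨m, hrank, hsum⟩ := exists_staircase_bgRank k
    obtain ⟨t, ht⟩ := hdvd
    lift t to ℕ using by omega
    obtain ⟨L, hL, hLsum, hLrank⟩ := (isStrictPartitionList_staircase m).exists_sum_add_two_mul t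
    exact ⟨L, hL, by omega, hLrank.trans hrank⟩
end

section
/- For a partition π_d into distinct parts, the BG-rank of π_d depends only on the multiset of residues of the staircase decomposition: specifically, if the shifted Young diagram of π_d has column lengths c₁,…,c_{λ₁}, then BG(π_d) = −Σ_{i=1}^{λ₁} (−1)^i c_i. -/
open Finset PowerSeries

/-!
Both sides count the cells of the shifted diagram with sign `(-1)^j` in column `j`
(0-based). Row `k` fills columns `k, …, k + λ_k - 1`, whose signs sum to `(-1)^k` if `λ_k` is
odd and to `0` otherwise, so summing by rows gives the BG-rank; summing by columns gives
`∑ (-1)^j c_{j+1}`. Strictness puts every row inside the first `λ₁` columns.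
-/

theorem List.length_filter_eq_sum_range {α : Type*} (p : α → Bool) (d : α) (l : List α) :
    ((l.filter p).length : ℤ) = ∑ i ∈ Finset.range l.length, if p (l.getD i d) then 1 else 0 := by
  induction l with
  | nil => simp
  | cons a t ih =>
    rw [List.length_cons, Finset.sum_range_succ', List.filter_cons]
    simp only [List.getD_cons_succ, List.getD_cons_zero, ← ih]
    by_cases h : p a <;> simp [h]

theorem sum_Ico_add_neg_one_pow (k n : ℕ) :
    ∑ i ∈ Ico k (k + n), (-1 : ℤ) ^ i = (-1) ^ k * if n % 2 = 1 then 1 else 0 := by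
  rw [sum_Ico_eq_sum_range, Nat.add_sub_cancel_left]
  simp only [pow_add, ← mul_sum, neg_one_geom_sum, Nat.even_iff]
  split_ifs <;> omega

theorem bgRank_eq_sum_range (L : List ℕ) :
    bgRank L = ∑ k ∈ range L.length, (-1 : ℤ) ^ k * if L.getD k 0 % 2 = 1 then 1 else 0 := by
  rw [bgRank, List.length_filter_eq_sum_range _ (0, 0),
    List.length_filter_eq_sum_range _ (0, 0), List.length_map, List.length_zipIdx,
    ← sum_sub_distrib]
  refine sum_congr rfl fun k hk => ?_
  have hk : k < L.length := mem_range.mp hk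
  have hswap : (L.zipIdx.map Prod.swap).getD k (0, 0) = (k, L.getD k 0) := by
    rw [List.getD_eq_getElem _ _ (by simpa using hk), List.getD_eq_getElem L 0 hk]
    simp
  rw [hswap]
  rcases Nat.mod_two_eq_zero_or_one k with hk2 | hk2 <;>
    simp [hk2, neg_one_pow_eq_pow_mod_two k, apply_ite Neg.neg]

theorem bgRank_eq_sum_cells (L : List ℕ) :
    bgRank L = ∑ k ∈ range L.length, ∑ i ∈ Ico k (k + L.getD k 0), (-1 : ℤ) ^ i := by
  simp only [bgRank_eq_sum_range, sum_Ico_add_neg_one_pow]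

theorem sum_mul_shiftedCol_eq_sum_cells (L : List ℕ) {m : ℕ}
    (hm : ∀ k < L.length, k + L.getD k 0 ≤ m) (f : ℕ → ℤ) :
    ∑ i ∈ range m, f i * shiftedCol L (i + 1) =
      ∑ k ∈ range L.length, ∑ i ∈ Ico k (k + L.getD k 0), f i := by
  have hcol : ∀ i, shiftedCol L (i + 1) = #{k ∈ range L.length | i ∈ Ico k (k + L.getD k 0)} :=
    fun i => congrArg card <| filter_congr fun k _ => by simp only [mem_Ico]; omega
  rw [sum_comm' (t' := range m) (s' := fun i => {k ∈ range L.length | i ∈ Ico k (k + L.getD k 0)})]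
  · simp only [sum_const, hcol, nsmul_eq_mul, mul_comm]
  · intro k i
    simp only [mem_filter, mem_range, mem_Ico]
    have := hm k
    omega

theorem List.Pairwise.add_getD_le_headI {L : List ℕ} (hL : L.Pairwise (· > ·)) :
    ∀ k < L.length, k + L.getD k 0 ≤ L.headI := by
  intro k hk
  induction k with
  | zero => cases L <;> simp_all
  | succ k ih =>
    have hdesc : L.getD (k + 1) 0 < L.getD k 0 := by
      rw [L.getD_eq_getElem 0 hk, L.getD_eq_getElem 0 (by omega)]
      exact List.pairwise_iff_getElem.mp hL k (k + 1) (by omega) hk (by omega)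
    have := ih (by omega)
    omega

/-- for a strict partition, `BG(π_d) = −∑_{i=1}^{λ₁} (−1)^i c_i` where the
`c_i` are the shifted Young diagram column lengths. -/
theorem bgRank_eq_neg_altColSum (L : List ℕ) (hL : IsStrictPartitionList L) :
    bgRank L = -∑ i ∈ Finset.range L.headI, (-1 : ℤ) ^ (i + 1) * (shiftedCol L (i + 1) : ℤ) := by
  simp only [pow_succ, mul_neg_one, neg_mul, sum_neg_distrib, neg_neg]
  rw [sum_mul_shiftedCol_eq_sum_cells L hL.1.add_getD_le_headI, bgRank_eq_sum_cells]
end
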